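/- If V is a finite-dimensional F_q-subspace of a field L containing F_q, then the polynomial e_V(X) = X · ∏_{0 ≠ v ∈ V} (1 − X/v) ∈ L[X] is F_q-linear as a function on any field extension of L: e_V(x + y) = e_V(x) + e_V(y) and e_V(c·x) = c·e_V(x) for all c ∈ F_q. -/

import Mathlib

/-!
Up to the nonzero constant `∏_{0 ≠ v ∈ V} (-v⁻¹)`, `e_V` is the monic polynomial
`P = ∏_{v ∈ V} (X - v)`. For fixed `y`, the polynomials `P(X + y)` and `P + P(y)` are monic of
degree `|V|` and agree on the `|V|` points of `V`, because `P` is invariant under translation by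
`V` and vanishes on `V`; hence they are equal, and `P` is additive. For `c ∈ 𝔽_q` nonzero,
`v ↦ c v` permutes `V`, so `P(c x) = c ^ |V| P(x)`, and `c ^ |V| = c` since `|V|` is a power of `q`.
-/

open Polynomial

/-- The polynomial `e_V(X) = X · ∏_{0 ≠ v ∈ s} (1 - X/v)`, where the finset `s`
enumerates the nonzero elements of a finite `𝔽_q`-subspace `V` of `L`. -/
noncomputable def latticePoly {L : Type*} [Field L] (s : Finset L) : Polynomial L :=
  Polynomial.X * ∏ v ∈ s, (1 - Polynomial.C v⁻¹ * Polynomial.X)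

open Lagrange Finset

theorem FiniteField.pow_natCard_module {K V : Type*} [Field K] [Finite K] [AddCommGroup V]
    [Module K V] [Finite V] (c : K) : c ^ Nat.card V = c := by
  have : Fintype K := Fintype.ofFinite K
  rw [Module.natCard_eq_pow_finrank (K := K), Nat.card_eq_fintype_card, FiniteField.pow_card_pow]

namespace Lagrange

section AddSubgroup

variable {R : Type*} [CommRing R] {G : AddSubgroup R} {T : Finset R}

theorem eval_nodal_add_of_mem (hT : ∀ x, x ∈ T ↔ x ∈ G) (x : R) {v : R} (hv : v ∈ G) :
    eval (x + v) (nodal T id) = eval x (nodal T id) := by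
  simp only [eval_nodal, id]
  refine (prod_equiv (Equiv.addRight v) (fun w => ?_) (fun w _ => ?_)).symm
  · simp only [hT, Equiv.coe_addRight, add_mem_cancel_right hv]
  · simp only [Equiv.coe_addRight, add_sub_add_right_eq_sub]

theorem eval_nodal_add [IsDomain R] (hT : ∀ x, x ∈ T ↔ x ∈ G) (x y : R) :
    eval (x + y) (nodal T id) = eval x (nodal T id) + eval y (nodal T id) := by
  have hpos : 0 < degree (nodal T id) := by
    rw [degree_nodal, Nat.cast_pos, Finset.card_pos]
    exact ⟨0, (hT 0).2 G.zero_mem⟩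
  have htaylor : taylor y (nodal T id) = nodal T id + C (eval y (nodal T id)) := by
    refine eq_of_degree_le_of_eval_finset_eq T ?_ ?_ ?_ (fun v hv => ?_)
    · rw [degree_taylor, degree_nodal]
    · rw [degree_taylor, degree_add_C hpos]
    · rw [leadingCoeff_taylor, leadingCoeff_add_of_degree_lt' (degree_C_le.trans_lt hpos)]
    · have hroot : eval v (nodal T id) = 0 := eval_nodal_at_node (v := id) hv
      rw [taylor_eval, add_comm, eval_nodal_add_of_mem hT y ((hT v).1 hv), eval_add, eval_C,
        hroot, zero_add]
  simpa [taylor_eval] using congrArg (eval x) htaylor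

end AddSubgroup

section Submodule

variable {K R : Type*} [Field K] [CommRing R] [Algebra K R] {G : Submodule K R} {T : Finset R}

theorem eval_nodal_smul_eq_pow_card_smul (hT : ∀ x, x ∈ T ↔ x ∈ G) (c : K) (x : R) :
    eval (c • x) (nodal T id) = c ^ #T • eval x (nodal T id) := by
  have h0T : (0 : R) ∈ T := (hT 0).2 G.zero_mem
  rcases eq_or_ne c 0 with rfl | hc
  · have hroot : eval 0 (nodal T id) = 0 := eval_nodal_at_node (v := id) h0T
    rw [zero_smul, hroot, zero_pow (card_ne_zero_of_mem h0T), zero_smul]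
  · simp only [eval_nodal, id, smul_prod]
    refine (prod_equiv (MulAction.toPerm (Units.mk0 c hc)) (fun w => ?_) (fun w _ => ?_)).symm
    · simp [hT, Submodule.smul_mem_iff _ hc]
    · simp [smul_sub]

theorem eval_nodal_smul [Finite K] (hT : ∀ x, x ∈ T ↔ x ∈ G) (c : K) (x : R) :
    eval (c • x) (nodal T id) = c • eval x (nodal T id) := by
  let e : T ≃ G := Equiv.subtypeEquivRight hT
  have : Finite G := Finite.of_equiv T e
  rw [eval_nodal_smul_eq_pow_card_smul hT, ← Nat.card_eq_finsetCard, Nat.card_congr e,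
    FiniteField.pow_natCard_module]

end Submodule

theorem aeval_nodal {L M : Type*} [Field L] [CommRing M] [Nontrivial M] [Algebra L M]
    [DecidableEq M] (T : Finset L) (x : M) :
    aeval x (nodal T id) = eval x (nodal (T.image (algebraMap L M)) id) := by
  rw [eval_nodal, prod_image (FaithfulSMul.algebraMap_injective L M).injOn, nodal, map_prod]
  simp

end Lagrange

theorem latticePoly_eq_C_mul_nodal {L : Type*} [Field L] [DecidableEq L] {s : Finset L}
    (h0 : (0 : L) ∉ s) : latticePoly s = C (∏ v ∈ s, -v⁻¹) * nodal (insert 0 s) id := by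
  have hfactor : ∀ v ∈ s, 1 - C v⁻¹ * X = C (-v⁻¹) * (X - C v) := fun v hv => by
    rw [mul_sub, ← C_mul, neg_mul, inv_mul_cancel₀ (ne_of_mem_of_not_mem hv h0)]
    simp only [C_neg, C_1]
    ring
  rw [latticePoly, prod_congr rfl hfactor, prod_mul_distrib, ← map_prod, nodal_insert_eq_nodal h0,
    nodal_eq]
  simp only [id, C_0, sub_zero]
  ring

theorem latticePoly_linear_general (p n : ℕ) [Fact p.Prime]
    (L : Type*) [Field L] [Algebra (GaloisField p n) L]
    (V : Submodule (GaloisField p n) L) (s : Finset L)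
    (hs : ∀ v : L, v ∈ s ↔ (v ∈ V ∧ v ≠ 0))
    (M : Type*) [Field M] [Algebra L M] [Algebra (GaloisField p n) M]
    [IsScalarTower (GaloisField p n) L M] :
    (∀ x y : M, Polynomial.aeval (x + y) (latticePoly s) =
        Polynomial.aeval x (latticePoly s) + Polynomial.aeval y (latticePoly s)) ∧
    (∀ (c : GaloisField p n) (x : M), Polynomial.aeval (c • x) (latticePoly s) =
        c • Polynomial.aeval x (latticePoly s)) := by
  classical
  have h0 : (0 : L) ∉ s := fun h => ((hs 0).1 h).2 rfl
  have hV : ∀ v, v ∈ insert 0 s ↔ v ∈ V := fun v => by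
    rw [mem_insert, hs]
    by_cases hv : v = 0 <;> simp [hv, V.zero_mem]
  let W := V.map (IsScalarTower.toAlgHom (GaloisField p n) L M).toLinearMap
  set T := (insert 0 s).image (algebraMap L M)
  have hW : ∀ x, x ∈ T ↔ x ∈ W := fun x => by
    simp only [T, mem_image, hV, W, Submodule.mem_map]
    rfl
  have he : ∀ x : M,
      aeval x (latticePoly s) = algebraMap L M (∏ v ∈ s, -v⁻¹) * eval x (nodal T id) :=
    fun x => by rw [latticePoly_eq_C_mul_nodal h0, map_mul, aeval_C, aeval_nodal]
  refine ⟨fun x y => ?_, fun c x => ?_⟩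
  · rw [he, he, he, eval_nodal_add (G := W.toAddSubgroup) hW, mul_add]
  · rw [he, he, eval_nodal_smul hW, mul_smul_comm]

/-- If `V` is a finite-dimensional `𝔽_q`-subspace of a field `L` containing
`𝔽_q`, then `e_V(X) = X·∏_{0≠v∈V}(1 − X/v)` is `𝔽_q`-linear as a function on any field
extension `M` of `L`: `e_V(x+y) = e_V(x) + e_V(y)` and `e_V(c·x) = c·e_V(x)` for `c ∈ 𝔽_q`. -/
theorem latticePoly_linear (p n : ℕ) [Fact p.Prime] (hn : n ≠ 0) (q : ℕ) (hq : q = p ^ n)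
    (L : Type*) [Field L] [CharP L p] [Algebra (GaloisField p n) L]
    (V : Submodule (GaloisField p n) L) (s : Finset L)
    (hs : ∀ v : L, v ∈ s ↔ (v ∈ V ∧ v ≠ 0))
    (M : Type*) [Field M] [Algebra L M] [Algebra (GaloisField p n) M]
    [IsScalarTower (GaloisField p n) L M] :
    (∀ x y : M, Polynomial.aeval (x + y) (latticePoly s) =
        Polynomial.aeval x (latticePoly s) + Polynomial.aeval y (latticePoly s)) ∧
    (∀ (c : GaloisField p n) (x : M), Polynomial.aeval (c • x) (latticePoly s) =
        c • Polynomial.aeval x (latticePoly s)) :=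
  latticePoly_linear_general p n L V s hs M
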